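/- A permutation σ of [n] has no two consecutive descents and no descent at the last position if and only if its increasing binary min-tree T(σ) has no node whose only child is a left child. -/

import Mathlib

open Finset
open scoped Classical

/-- entry of a permutation of `Fin n` at 0-indexed position `i` (0-based values). -/
def ent {n : ℕ} (σ : Equiv.Perm (Fin n)) (i : ℕ) : ℕ :=
  if h : i < n then (σ ⟨i, h⟩ : ℕ) else 0

/-- the triple `(a, b, c)` of distinct values, reduced to a permutation in `S₃`, is odd. -/
def odd3 (a b c : ℕ) : Prop :=
  ((if b < a then 1 else 0) + (if c < a then 1 else 0) + (if c < b then 1 else 0)) % 2 = 1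

instance (a b c : ℕ) : Decidable (odd3 a b c) := by
  unfold odd3; infer_instance

/-- 3-descent set, 0-indexed positions (position `i` here is paper position `i+1`). -/
def D3 {n : ℕ} (σ : Equiv.Perm (Fin n)) : Finset ℕ :=
  (Finset.range (n - 2)).filter (fun i => odd3 (ent σ i) (ent σ (i + 1)) (ent σ (i + 2)))

/-- alternating descent set, 0-indexed positions. -/
def altD {n : ℕ} (σ : Equiv.Perm (Fin n)) : Finset ℕ :=
  (Finset.range (n - 1)).filter (fun i =>
    (Even i ∧ ent σ (i + 1) < ent σ i) ∨ (¬ Even i ∧ ent σ i < ent σ (i + 1)))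

/-- number of up-down alternating permutations of `[n]` (the Euler number `Eₙ`). -/
noncomputable def EulerNum (n : ℕ) : ℕ :=
  ((Finset.univ : Finset (Equiv.Perm (Fin n))).filter (fun τ =>
    ∀ i ∈ Finset.range (n - 1),
      (Even i ∧ ent τ i < ent τ (i + 1)) ∨ (¬ Even i ∧ ent τ (i + 1) < ent τ i))).card

/-- `c³ᵢ(σ)`, 0-indexed: number of `j > i+1` with `σᵢ σᵢ₊₁ σⱼ` odd. -/
def c3 {n : ℕ} (σ : Equiv.Perm (Fin n)) (i : ℕ) : ℕ :=
  ((Finset.range n).filter (fun j => i + 1 < j ∧ odd3 (ent σ i) (ent σ (i + 1)) (ent σ j))).card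

/-- `ĉᵢ(σ)`, 0-indexed. -/
def chat {n : ℕ} (σ : Equiv.Perm (Fin n)) (i : ℕ) : ℕ :=
  ((Finset.range n).filter (fun j => i < j ∧
    ((Even i ∧ ent σ j < ent σ i) ∨ (¬ Even i ∧ ent σ i < ent σ j)))).card

/-- `i₃` of an arbitrary word `f 0, f 1, ..., f (m-1)`. -/
def i3f (m : ℕ) (f : ℕ → ℕ) : ℕ :=
  ((Finset.range m ×ˢ Finset.range m).filter (fun p =>
    p.1 + 1 < p.2 ∧ odd3 (f p.1) (f (p.1 + 1)) (f p.2))).card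

/-- the 3-inversion statistic `i₃`. -/
def i3 {n : ℕ} (σ : Equiv.Perm (Fin n)) : ℕ := i3f n (ent σ)

/-- the word `1*σ` (0-based values): `0, σ₀+1, σ₁+1, ...`. -/
def oneStar {n : ℕ} (σ : Equiv.Perm (Fin n)) : ℕ → ℕ :=
  fun i => if i = 0 then 0 else ent σ (i - 1) + 1

/-- number of alternating inversions `î(σ)`. -/
def altInv {n : ℕ} (σ : Equiv.Perm (Fin n)) : ℕ :=
  ((Finset.range n ×ˢ Finset.range n).filter (fun p => p.1 < p.2 ∧
    ((Even p.1 ∧ ent σ p.2 < ent σ p.1) ∨ (¬ Even p.1 ∧ ent σ p.1 < ent σ p.2)))).card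

/-- number of inversions of the word `f 0, ..., f (m-1)`. -/
def invf (m : ℕ) (f : ℕ → ℕ) : ℕ :=
  ((Finset.range m ×ˢ Finset.range m).filter (fun p => p.1 < p.2 ∧ f p.2 < f p.1)).card

/-- major index of the word `f 0, ..., f (m-1)` (descent at 0-indexed `i` contributes `i+1`). -/
def majf (m : ℕ) (f : ℕ → ℕ) : ℕ :=
  ∑ i ∈ (Finset.range (m - 1)).filter (fun i => f (i + 1) < f i), (i + 1)

/-- `Â(m, r)`: number of permutations of `[m]` with `r - 1` alternating descents. -/
def Ahat (m r : ℕ) : ℕ :=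
  ((Finset.univ : Finset (Equiv.Perm (Fin m))).filter (fun σ => (altD σ).card + 1 = r)).card

/-- down-up alternating: `σ₁ > σ₂ < σ₃ > ⋯`. -/
def DownUp {n : ℕ} (σ : Equiv.Perm (Fin n)) : Prop :=
  ∀ i ∈ Finset.range (n - 1),
    (Even i ∧ ent σ (i + 1) < ent σ i) ∨ (¬ Even i ∧ ent σ i < ent σ (i + 1))

instance {n : ℕ} (σ : Equiv.Perm (Fin n)) : Decidable (DownUp σ) := by
  unfold DownUp; infer_instance

/-- up-down alternating: `σ₁ < σ₂ > σ₃ < ⋯`. -/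
def UpDown {n : ℕ} (σ : Equiv.Perm (Fin n)) : Prop :=
  ∀ i ∈ Finset.range (n - 1),
    (Even i ∧ ent σ i < ent σ (i + 1)) ∨ (¬ Even i ∧ ent σ (i + 1) < ent σ i)

inductive BTree where
  | leaf : BTree
  | node : BTree → ℕ → BTree → BTree
deriving DecidableEq

/-- min-tree of a word, with fuel for termination. -/
def minTreeAux : ℕ → List ℕ → BTree
  | 0, _ => .leaf
  | _, [] => .leaf
  | fuel + 1, a :: w =>
      let m := (a :: w).foldr min a
      let l := (a :: w).takeWhile (fun x => x != m)
      let r := ((a :: w).dropWhile (fun x => x != m)).drop 1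
      .node (minTreeAux fuel l) m (minTreeAux fuel r)

/-- the increasing binary min-tree `T(w)` of a word `w` with distinct letters. -/
def minTree (w : List ℕ) : BTree := minTreeAux w.length w

/-- no node has a lone left child. -/
def noLoneLeft : BTree → Prop
  | .leaf => True
  | .node l _ r => ¬(l ≠ .leaf ∧ r = .leaf) ∧ noLoneLeft l ∧ noLoneLeft r

/-!
Both conditions say that every descent `wᵢ > wᵢ₊₁` is followed by a rise `wᵢ₊₁ < wᵢ₊₂`.
Split the word at its minimum, `w = w₁ m w₂`, so that `T(w)` has root `m` and subtrees `T(w₁)`,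
`T(w₂)`. Since `m` lies below every other letter, `w` has the property iff `w₁` and `w₂` have it
and, when `w₁` is nonempty, the descent into `m` is followed by a rise, i.e. `w₂` is nonempty:
exactly the condition that `m` has no lone left child. Induct on the length.
-/

namespace List

variable {α : Type*}

theorem foldr_min_mem [LinearOrder α] (a : α) (l : List α) : l.foldr min a ∈ a :: l := by
  induction l with
  | nil => simp
  | cons b t ih =>
    rcases min_choice b (t.foldr min a) with h | h <;> simp only [foldr_cons, h] <;> grind

theorem foldr_min_le [LinearOrder α] (a : α) (l : List α) : ∀ x ∈ l, l.foldr min a ≤ x := by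
  induction l with
  | nil => simp
  | cons b t ih => grind

variable [BEq α] [LawfulBEq α]

theorem eq_takeWhile_append_cons_dropWhile {m : α} {l : List α} (hm : m ∈ l) :
    l = l.takeWhile (· != m) ++ m :: (l.dropWhile (· != m)).drop 1 := by
  have hne : l.dropWhile (· != m) ≠ [] := by
    intro h
    simpa using dropWhile_eq_nil_iff.1 h m hm
  have hhead : (l.dropWhile (· != m)).head hne = m := by
    simpa using head_dropWhile_not (· != m) hne
  conv_lhs => rw [← takeWhile_append_dropWhile (p := (· != m)) (l := l), ← cons_head_tail hne]
  rw [hhead, drop_one]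

theorem length_takeWhile_add_length_drop_dropWhile {m : α} {l : List α} (hm : m ∈ l) :
    (l.takeWhile (· != m)).length + ((l.dropWhile (· != m)).drop 1).length + 1 = l.length := by
  conv_rhs => rw [eq_takeWhile_append_cons_dropWhile hm]
  simp only [length_append, length_cons]
  omega

end List

theorem foldr_min_mem_cons (a : ℕ) (t : List ℕ) : (a :: t).foldr min a ∈ a :: t := by
  simpa using List.foldr_min_mem a (a :: t)

theorem minTreeAux_eq_of_length_le :
    ∀ (f g : ℕ) (w : List ℕ), w.length ≤ f → w.length ≤ g → minTreeAux f w = minTreeAux g w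
  | 0, g, [], _, _ | f + 1, g, [], _, _ => by cases g <;> rfl
  | f + 1, g + 1, a :: t, hf, hg => by
    have hlen := List.length_takeWhile_add_length_drop_dropWhile (foldr_min_mem_cons a t)
    simp only [List.length_cons] at hlen hf hg
    simp only [minTreeAux]
    congr 1 <;> apply minTreeAux_eq_of_length_le <;> omega

theorem minTree_cons (a : ℕ) (t : List ℕ) :
    ∃ w₁ m w₂, a :: t = w₁ ++ m :: w₂ ∧ (∀ x ∈ w₁, m < x) ∧ (∀ x ∈ w₂, m ≤ x) ∧
      minTree (a :: t) = .node (minTree w₁) m (minTree w₂) := by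
  have hlen := List.length_takeWhile_add_length_drop_dropWhile (foldr_min_mem_cons a t)
  set m := (a :: t).foldr min a with hm
  have hmin : ∀ x ∈ a :: t, m ≤ x := List.foldr_min_le a (a :: t)
  refine ⟨_, m, _, List.eq_takeWhile_append_cons_dropWhile (foldr_min_mem_cons a t),
    fun x hx => ?_, fun x hx => hmin x ?_, ?_⟩
  · have hxm : x ≠ m := by simpa using List.mem_takeWhile_imp hx
    exact (hmin x ((List.takeWhile_prefix _).subset hx)).lt_of_ne' hxm
  · exact List.dropWhile_subset _ (List.mem_of_mem_drop hx)
  · simp only [List.length_cons] at hlen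
    simp only [minTree, List.length_cons, minTreeAux, ← hm]
    congr 1 <;> apply minTreeAux_eq_of_length_le <;> omega

theorem minTree_eq_leaf_iff (w : List ℕ) : minTree w = .leaf ↔ w = [] := by
  rcases w with _ | ⟨a, t⟩
  · simp [minTree, minTreeAux]
  · obtain ⟨_, _, _, -, -, -, htree⟩ := minTree_cons a t
    simp [htree]

def DescentsFollowedByRise : List ℕ → Prop
  | a :: b :: t => (b < a → ∃ c ∈ t.head?, ¬ c < b) ∧ DescentsFollowedByRise (b :: t)
  | _ => True

theorem descentsFollowedByRise_cons_of_le {m : ℕ} {w : List ℕ} (h : ∀ x ∈ w, m ≤ x) :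
    DescentsFollowedByRise (m :: w) ↔ DescentsFollowedByRise w := by
  rcases w with _ | ⟨c, t⟩
  · simp [DescentsFollowedByRise]
  · simp [DescentsFollowedByRise, not_lt.2 (h c (by simp))]

theorem descentsFollowedByRise_append_cons {m : ℕ} {w₂ : List ℕ} (h₂ : ∀ x ∈ w₂, m ≤ x) :
    ∀ {w₁ : List ℕ}, (∀ x ∈ w₁, m < x) →
      (DescentsFollowedByRise (w₁ ++ m :: w₂) ↔
        DescentsFollowedByRise w₁ ∧ DescentsFollowedByRise w₂ ∧ (w₁ ≠ [] → w₂ ≠ []))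
  | [], _ => by simp [descentsFollowedByRise_cons_of_le h₂, DescentsFollowedByRise]
  | [a], h₁ => by
    have hma : m < a := h₁ a (by simp)
    have hrise : (∃ c ∈ w₂.head?, ¬ c < m) ↔ w₂ ≠ [] := by
      cases w₂ <;> simp_all
    simp only [List.cons_append, List.nil_append, DescentsFollowedByRise, hrise,
      descentsFollowedByRise_cons_of_le h₂]
    tauto
  | a :: b :: w₁, h₁ => by
    have hmb : m < b := h₁ b (by simp)
    have hrise : (∃ c ∈ (w₁ ++ m :: w₂).head?, ¬ c < b) ↔ ∃ c ∈ w₁.head?, ¬ c < b := by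
      cases w₁ <;> simp [hmb]
    have ih := descentsFollowedByRise_append_cons h₂ (w₁ := b :: w₁)
      (fun x hx => h₁ x (List.mem_cons_of_mem a hx))
    simp only [List.cons_append, DescentsFollowedByRise, hrise] at ih ⊢
    rw [ih]
    simp only [ne_eq, reduceCtorEq, not_false_eq_true, forall_const]
    tauto

theorem noLoneLeft_minTree_iff (w : List ℕ) :
    noLoneLeft (minTree w) ↔ DescentsFollowedByRise w := by
  induction hn : w.length using Nat.strong_induction_on generalizing w with
  | _ n ih =>
    rcases w with _ | ⟨a, t⟩
    · simp [minTree, minTreeAux, noLoneLeft, DescentsFollowedByRise]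
    · obtain ⟨w₁, m, w₂, hsplit, h₁, h₂, htree⟩ := minTree_cons a t
      have hlen := congrArg List.length hsplit
      simp only [List.length_cons, List.length_append] at hlen hn
      rw [htree, hsplit, descentsFollowedByRise_append_cons h₂ h₁, noLoneLeft,
        ih _ (by omega) w₁ rfl, ih _ (by omega) w₂ rfl]
      simp only [ne_eq, minTree_eq_leaf_iff]
      tauto

theorem descentsFollowedByRise_iff_getD :
    ∀ l : List ℕ, DescentsFollowedByRise l ↔ ∀ i, i + 1 < l.length →
      l.getD (i + 1) 0 < l.getD i 0 → i + 2 < l.length ∧ ¬ l.getD (i + 2) 0 < l.getD (i + 1) 0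
  | [] | [_] => by simp [DescentsFollowedByRise]
  | a :: b :: t => by
    have hrise : (∃ c ∈ t.head?, ¬ c < b) ↔ 0 < t.length ∧ ¬ t.getD 0 0 < b := by
      cases t <;> simp
    rw [DescentsFollowedByRise, descentsFollowedByRise_iff_getD (b :: t), hrise]
    conv_rhs => rw [← Nat.and_forall_add_one]
    simp only [List.length_cons, List.getD_cons_succ, List.getD_cons_zero]
    exact and_congr (by grind) (forall_congr' fun i => by grind)

theorem forall_descent_imp_rise_iff (f : ℕ → ℕ) (n : ℕ) :
    (∀ i, i + 1 < n → f (i + 1) < f i → i + 2 < n ∧ ¬ f (i + 2) < f (i + 1)) ↔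
      (∀ i, i + 2 < n → ¬(f (i + 1) < f i ∧ f (i + 2) < f (i + 1))) ∧
        (2 ≤ n → ¬ f (n - 1) < f (n - 2)) := by
  constructor
  · intro h
    refine ⟨fun i hi ⟨hd, hd'⟩ => (h i (by omega) hd).2 hd', fun hn hd => ?_⟩
    obtain ⟨k, rfl⟩ : ∃ k, n = k + 2 := ⟨n - 2, by omega⟩
    exact absurd (h k (by omega) (by simpa using hd)).1 (by omega)
  · rintro ⟨hdd, hend⟩ i hi hd
    by_cases hi' : i + 2 < n
    · exact ⟨hi', fun hd' => hdd i hi' ⟨hd, hd'⟩⟩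
    · obtain rfl : n = i + 2 := by omega
      exact absurd hd (by simpa using hend)

theorem ent_eq_getD {n : ℕ} (σ : Equiv.Perm (Fin n)) (i : ℕ) :
    ent σ i = ((List.finRange n).map (fun j => (σ j : ℕ))).getD i 0 := by
  unfold ent
  split_ifs with h <;> simp [List.getD_eq_getElem?_getD, h]

theorem stmt15 (n : ℕ) (σ : Equiv.Perm (Fin n)) :
    ((∀ i, i + 2 < n → ¬(ent σ (i + 1) < ent σ i ∧ ent σ (i + 2) < ent σ (i + 1))) ∧
      (2 ≤ n → ¬ ent σ (n - 1) < ent σ (n - 2))) ↔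
    noLoneLeft (minTree ((List.finRange n).map (fun i => (σ i : ℕ)))) := by
  rw [noLoneLeft_minTree_iff, descentsFollowedByRise_iff_getD, List.length_map,
    List.length_finRange]
  simp only [← ent_eq_getD]
  exact (forall_descent_imp_rise_iff (ent σ) n).symm
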